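/- Let (P, ≼, ∧, ∨) be a locally finite lattice with least element 0̂, let f be a semimultiplicative complex-valued function on P with f(x) ≠ 0 for all x ∈ P, set g(x) = 1/f(x), and let S = {x_1, …, x_n} be a finite meet closed subset of P with distinct elements, indexed so that x_i ≼ x_j only if i ≤ j. Assume d_i = ∑_{z ≼ x_i, z ⋠ x_j for all j < i} (f_d * μ)(0̂, z) ≠ 0 and l_i = ∑_{z ≼ x_i, z ⋠ x_j for all j < i} (g_d * μ)(0̂, z) ≠ 0 for all i. Then every nonzero (S)_f-eigenvalue λ ∈ ℂ of [S]_f satisfies |λ| ≥ (min_{1≤i≤n} |f(x_i)|²) · m_g · M_f⁻¹ · C_n⁻¹ · c_n, where m_g = min_{1≤i≤n} |l_i| and M_f = max_{1≤i≤n} |d_i|. -/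

import Mathlib

/-!
Let `E i j = [x j ≤ x i]` be the zeta matrix of `S`; it lies in `K(n)`. Since `S` is meet closed,
the blocks `{z ≤ x k : z ≰ x j for j < k}` with `x k ≤ x m` partition `[0̂, x m]`, so Möbius
inversion gives `(S)_f = E diag(d) Eᵀ` and `(S)_g = E diag(l) Eᵀ`; semimultiplicativity gives
`[S]_f = F (S)_g F` with `F = diag(f(x i))`. Take squared norms in
`F E diag(l) Eᵀ F v = λ E diag(d) Eᵀ v`: the Rayleigh quotient of `E Eᵀ` gives
`c_n ‖w‖² ≤ ‖Eᵀ w‖² ≤ C_n ‖w‖²`, and the same for `E`, because reversing the order of the indices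
turns `Eᵀ` into a matrix of `K(n)`. Hence
`(min |f(x i)|² · m_g · c_n)² ‖v‖² ≤ |λ|² (C_n M_f)² ‖v‖²`.
-/

open Matrix

/-- `K n` : the set of `n × n` real lower triangular `0,1`-matrices with unit diagonal. -/
def MemKn {n : ℕ} (X : Matrix (Fin n) (Fin n) ℝ) : Prop :=
  (∀ i j, i < j → X i j = 0) ∧ (∀ i j, X i j = 0 ∨ X i j = 1) ∧ (∀ i, X i i = 1)

/-- The smallest eigenvalue of the (Hermitian) matrix `X * Xᴴ`. -/
noncomputable def gramMinEig {n : ℕ} (X : Matrix (Fin n) (Fin n) ℝ) : ℝ :=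
  ⨅ i, (Matrix.isHermitian_mul_conjTranspose_self X).eigenvalues i

/-- The largest eigenvalue of the (Hermitian) matrix `X * Xᴴ`. -/
noncomputable def gramMaxEig {n : ℕ} (X : Matrix (Fin n) (Fin n) ℝ) : ℝ :=
  ⨆ i, (Matrix.isHermitian_mul_conjTranspose_self X).eigenvalues i

/-- `c n` : the minimum over `X ∈ K n` of the smallest eigenvalue of `X Xᵀ`. -/
noncomputable def cKn (n : ℕ) : ℝ :=
  ⨅ X : {X : Matrix (Fin n) (Fin n) ℝ // MemKn X}, gramMinEig X.1

/-- `C n` : the maximum over `X ∈ K n` of the largest eigenvalue of `X Xᵀ`. -/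
noncomputable def CKn (n : ℕ) : ℝ :=
  ⨆ X : {X : Matrix (Fin n) (Fin n) ℝ // MemKn X}, gramMaxEig X.1

namespace Matrix.IsHermitian

variable {ι : Type*} [Fintype ι] [DecidableEq ι] {M : Matrix ι ι ℝ} (hM : M.IsHermitian)

lemma dotProduct_self_eq_sum_sq (y : ι → ℝ) :
    y ⬝ᵥ y = ∑ i, (star (hM.eigenvectorUnitary : Matrix ι ι ℝ) *ᵥ y) i ^ 2 := by
  set U : Matrix ι ι ℝ := ↑hM.eigenvectorUnitary
  have hU : U * star U = 1 := Matrix.mem_unitaryGroup_iff.1 hM.eigenvectorUnitary.2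
  calc y ⬝ᵥ y = y ⬝ᵥ U *ᵥ (star U *ᵥ y) := by rw [mulVec_mulVec, hU, one_mulVec]
    _ = _ := by
      rw [dotProduct_mulVec, ← mulVec_transpose, dotProduct]
      simp [sq, star_eq_conjTranspose, conjTranspose_eq_transpose_of_trivial]

lemma dotProduct_mulVec_eq_sum_eigenvalues (y : ι → ℝ) :
    y ⬝ᵥ M *ᵥ y =
      ∑ i, hM.eigenvalues i * (star (hM.eigenvectorUnitary : Matrix ι ι ℝ) *ᵥ y) i ^ 2 := by
  conv_lhs => rw [hM.spectral_theorem, Unitary.conjStarAlgAut_apply]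
  rw [← mulVec_mulVec, ← mulVec_mulVec, dotProduct_mulVec, ← mulVec_transpose, dotProduct]
  simp [sq, mulVec_diagonal, star_eq_conjTranspose, conjTranspose_eq_transpose_of_trivial,
    mul_left_comm]

lemma iInf_eigenvalues_mul_le (y : ι → ℝ) :
    (⨅ i, hM.eigenvalues i) * (y ⬝ᵥ y) ≤ y ⬝ᵥ M *ᵥ y := by
  rw [hM.dotProduct_self_eq_sum_sq, hM.dotProduct_mulVec_eq_sum_eigenvalues, Finset.mul_sum]
  exact Finset.sum_le_sum fun i _ =>
    mul_le_mul_of_nonneg_right (ciInf_le (Set.finite_range _).bddBelow i) (sq_nonneg _)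

lemma le_iSup_eigenvalues_mul (y : ι → ℝ) :
    y ⬝ᵥ M *ᵥ y ≤ (⨆ i, hM.eigenvalues i) * (y ⬝ᵥ y) := by
  rw [hM.dotProduct_self_eq_sum_sq, hM.dotProduct_mulVec_eq_sum_eigenvalues, Finset.mul_sum]
  exact Finset.sum_le_sum fun i _ =>
    mul_le_mul_of_nonneg_right (le_ciSup (Set.finite_range _).bddAbove i) (sq_nonneg _)

end Matrix.IsHermitian

noncomputable def sqNorm {ι : Type*} [Fintype ι] (w : ι → ℂ) : ℝ := ∑ i, Complex.normSq (w i)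

section SqNorm

variable {ι : Type*} [Fintype ι]

lemma sqNorm_nonneg (w : ι → ℂ) : 0 ≤ sqNorm w :=
  Finset.sum_nonneg fun i _ => Complex.normSq_nonneg (w i)

lemma sqNorm_pos {w : ι → ℂ} (hw : w ≠ 0) : 0 < sqNorm w := by
  obtain ⟨i, hi⟩ := Function.ne_iff.1 hw
  exact Finset.sum_pos' (fun j _ => Complex.normSq_nonneg _)
    ⟨i, Finset.mem_univ i, Complex.normSq_pos.2 hi⟩

lemma sqNorm_smul (c : ℂ) (w : ι → ℂ) : sqNorm (c • w) = ‖c‖ ^ 2 * sqNorm w := by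
  simp [sqNorm, Complex.normSq_mul, Finset.mul_sum, Complex.sq_norm]

lemma sqNorm_comp_equiv (e : ι ≃ ι) (w : ι → ℂ) : sqNorm (w ∘ e) = sqNorm w :=
  e.sum_comp fun i => Complex.normSq (w i)

lemma sq_mul_sqNorm_le_sqNorm_diagonal_mulVec [DecidableEq ι] {c : ι → ℂ} {m : ℝ} (hm : 0 ≤ m)
    (hc : ∀ i, m ≤ ‖c i‖) (w : ι → ℂ) :
    m ^ 2 * sqNorm w ≤ sqNorm (diagonal c *ᵥ w) := by
  rw [sqNorm, sqNorm, Finset.mul_sum]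
  refine Finset.sum_le_sum fun i _ => ?_
  rw [mulVec_diagonal, Complex.normSq_mul, ← Complex.sq_norm (c i)]
  exact mul_le_mul_of_nonneg_right (by gcongr; exact hc i) (Complex.normSq_nonneg _)

lemma sqNorm_diagonal_mulVec_le_sq_mul [DecidableEq ι] {c : ι → ℂ} {M : ℝ}
    (hc : ∀ i, ‖c i‖ ≤ M) (w : ι → ℂ) :
    sqNorm (diagonal c *ᵥ w) ≤ M ^ 2 * sqNorm w := by
  rw [sqNorm, sqNorm, Finset.mul_sum]
  refine Finset.sum_le_sum fun i _ => ?_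
  rw [mulVec_diagonal, Complex.normSq_mul, ← Complex.sq_norm (c i)]
  exact mul_le_mul_of_nonneg_right (by gcongr; exact hc i) (Complex.normSq_nonneg _)

lemma sqNorm_eq_re_add_im (w : ι → ℂ) :
    sqNorm w = (fun i => (w i).re) ⬝ᵥ (fun i => (w i).re) +
      (fun i => (w i).im) ⬝ᵥ (fun i => (w i).im) := by
  simp only [sqNorm, dotProduct, Complex.normSq_apply, Finset.sum_add_distrib]

lemma sqNorm_map_ofReal_mulVec (A : Matrix ι ι ℝ) (w : ι → ℂ) :
    sqNorm (A.map Complex.ofReal *ᵥ w) =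
      (A *ᵥ fun i => (w i).re) ⬝ᵥ (A *ᵥ fun i => (w i).re) +
        (A *ᵥ fun i => (w i).im) ⬝ᵥ (A *ᵥ fun i => (w i).im) := by
  have hre : (fun i => ((A.map Complex.ofReal *ᵥ w) i).re) = A *ᵥ fun i => (w i).re := by
    ext i; simp [mulVec, dotProduct, Complex.re_sum]
  have him : (fun i => ((A.map Complex.ofReal *ᵥ w) i).im) = A *ᵥ fun i => (w i).im := by
    ext i; simp [mulVec, dotProduct, Complex.im_sum]
  rw [sqNorm_eq_re_add_im, hre, him]

end SqNorm

section Gram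

variable {n : ℕ}

lemma transpose_mulVec_dotProduct_self (X : Matrix (Fin n) (Fin n) ℝ) (y : Fin n → ℝ) :
    Xᵀ *ᵥ y ⬝ᵥ Xᵀ *ᵥ y = y ⬝ᵥ (X * Xᴴ) *ᵥ y := by
  rw [conjTranspose_eq_transpose_of_trivial, ← mulVec_mulVec, dotProduct_mulVec y X,
    ← mulVec_transpose]

lemma gramMinEig_mul_sqNorm_le (X : Matrix (Fin n) (Fin n) ℝ) (w : Fin n → ℂ) :
    gramMinEig X * sqNorm w ≤ sqNorm (Xᵀ.map Complex.ofReal *ᵥ w) := by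
  have hM := isHermitian_mul_conjTranspose_self X
  rw [sqNorm_map_ofReal_mulVec, transpose_mulVec_dotProduct_self,
    transpose_mulVec_dotProduct_self, sqNorm_eq_re_add_im, mul_add]
  exact add_le_add (hM.iInf_eigenvalues_mul_le _) (hM.iInf_eigenvalues_mul_le _)

lemma sqNorm_le_gramMaxEig_mul (X : Matrix (Fin n) (Fin n) ℝ) (w : Fin n → ℂ) :
    sqNorm (Xᵀ.map Complex.ofReal *ᵥ w) ≤ gramMaxEig X * sqNorm w := by
  have hM := isHermitian_mul_conjTranspose_self X
  rw [sqNorm_map_ofReal_mulVec, transpose_mulVec_dotProduct_self,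
    transpose_mulVec_dotProduct_self, sqNorm_eq_re_add_im, mul_add]
  exact add_le_add (hM.le_iSup_eigenvalues_mul _) (hM.le_iSup_eigenvalues_mul _)

end Gram

section Kn

variable {n : ℕ}

instance : Finite {X : Matrix (Fin n) (Fin n) ℝ // MemKn X} :=
  Finite.of_injective (β := Fin n → Fin n → ({0, 1} : Set ℝ))
    (fun X i j => ⟨X.1 i j, X.2.2.1 i j⟩)
    fun _ _ h => Subtype.ext <| Matrix.ext fun i j => congrArg Subtype.val (congrFun₂ h i j)

lemma MemKn.transpose_submatrix_rev {X : Matrix (Fin n) (Fin n) ℝ} (hX : MemKn X) :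
    MemKn (X.submatrix Fin.rev Fin.rev)ᵀ :=
  ⟨fun _ _ hij => hX.1 _ _ (Fin.rev_lt_rev.2 hij), fun _ _ => hX.2.1 _ _, fun _ => hX.2.2 _⟩

lemma gramMinEig_nonneg (X : Matrix (Fin n) (Fin n) ℝ) : 0 ≤ gramMinEig X :=
  Real.iInf_nonneg fun i => eigenvalues_self_mul_conjTranspose_nonneg X i

lemma gramMaxEig_nonneg (X : Matrix (Fin n) (Fin n) ℝ) : 0 ≤ gramMaxEig X :=
  Real.iSup_nonneg fun i => eigenvalues_self_mul_conjTranspose_nonneg X i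

lemma cKn_nonneg : 0 ≤ cKn n :=
  Real.iInf_nonneg fun X => gramMinEig_nonneg X.1

lemma CKn_nonneg : 0 ≤ CKn n :=
  Real.iSup_nonneg fun X => gramMaxEig_nonneg X.1

lemma cKn_le_gramMinEig {X : Matrix (Fin n) (Fin n) ℝ} (hX : MemKn X) : cKn n ≤ gramMinEig X :=
  ciInf_le (Set.finite_range _).bddBelow (⟨X, hX⟩ : {X // MemKn X})

lemma gramMaxEig_le_CKn {X : Matrix (Fin n) (Fin n) ℝ} (hX : MemKn X) : gramMaxEig X ≤ CKn n :=
  le_ciSup (f := fun X : {X // MemKn X} => gramMaxEig X.1) (Set.finite_range _).bddAbove ⟨X, hX⟩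

lemma MemKn.cKn_mul_sqNorm_le_transpose {X : Matrix (Fin n) (Fin n) ℝ} (hX : MemKn X)
    (w : Fin n → ℂ) : cKn n * sqNorm w ≤ sqNorm ((X.map Complex.ofReal)ᵀ *ᵥ w) := by
  rw [← transpose_map]
  exact (mul_le_mul_of_nonneg_right (cKn_le_gramMinEig hX) (sqNorm_nonneg w)).trans
    (gramMinEig_mul_sqNorm_le X w)

lemma MemKn.sqNorm_transpose_le_CKn_mul {X : Matrix (Fin n) (Fin n) ℝ} (hX : MemKn X)
    (w : Fin n → ℂ) : sqNorm ((X.map Complex.ofReal)ᵀ *ᵥ w) ≤ CKn n * sqNorm w := by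
  rw [← transpose_map]
  exact (sqNorm_le_gramMaxEig_mul X w).trans
    (mul_le_mul_of_nonneg_right (gramMaxEig_le_CKn hX) (sqNorm_nonneg w))

lemma map_ofReal_submatrix_rev_mulVec (X : Matrix (Fin n) (Fin n) ℝ) (w : Fin n → ℂ) :
    ((X.submatrix Fin.rev Fin.rev)ᵀ.map Complex.ofReal)ᵀ *ᵥ (w ∘ Fin.revPerm) =
      (X.map Complex.ofReal *ᵥ w) ∘ Fin.revPerm := by
  rw [← transpose_map, transpose_transpose, ← submatrix_map,
    show (Fin.rev : Fin n → Fin n) = Fin.revPerm from rfl, submatrix_mulVec_equiv,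
    Function.comp_assoc, Equiv.self_comp_symm, Function.comp_id]

lemma MemKn.cKn_mul_sqNorm_le {X : Matrix (Fin n) (Fin n) ℝ} (hX : MemKn X)
    (w : Fin n → ℂ) : cKn n * sqNorm w ≤ sqNorm (X.map Complex.ofReal *ᵥ w) := by
  have h := hX.transpose_submatrix_rev.cKn_mul_sqNorm_le_transpose (w ∘ Fin.revPerm)
  rwa [map_ofReal_submatrix_rev_mulVec, sqNorm_comp_equiv, sqNorm_comp_equiv] at h

lemma MemKn.sqNorm_le_CKn_mul {X : Matrix (Fin n) (Fin n) ℝ} (hX : MemKn X)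
    (w : Fin n → ℂ) : sqNorm (X.map Complex.ofReal *ᵥ w) ≤ CKn n * sqNorm w := by
  have h := hX.transpose_submatrix_rev.sqNorm_transpose_le_CKn_mul (w ∘ Fin.revPerm)
  rwa [map_ofReal_submatrix_rev_mulVec, sqNorm_comp_equiv, sqNorm_comp_equiv] at h

end Kn

section Moebius

variable {P R : Type*} [PartialOrder P] [LocallyFiniteOrder P] [Ring R] (mu : P → P → R)

open scoped Classical in
lemma sum_Icc_moebius (hmu_self : ∀ p, mu p p = 1)
    (hmu_lt : ∀ p q : P, p < q → mu p q = -∑ r ∈ Finset.Ico p q, mu p r) {p q : P} (h : p ≤ q) :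
    ∑ r ∈ Finset.Icc p q, mu p r = if p = q then 1 else 0 := by
  rcases h.lt_or_eq with hlt | rfl
  · rw [if_neg hlt.ne, ← Finset.Ico_insert_right h, Finset.sum_insert Finset.right_notMem_Ico,
      hmu_lt _ _ hlt, neg_add_cancel]
  · rw [if_pos rfl, Finset.Icc_self, Finset.sum_singleton, hmu_self]

lemma sum_Icc_bot_sum_Icc_bot_mul_moebius [OrderBot P] (hmu_self : ∀ p, mu p p = 1)
    (hmu_lt : ∀ p q : P, p < q → mu p q = -∑ r ∈ Finset.Ico p q, mu p r) (h : P → R) (y : P) :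
    ∑ z ∈ Finset.Icc ⊥ y, ∑ w ∈ Finset.Icc ⊥ z, h w * mu w z = h y := by
  classical
  rw [Finset.sum_comm' (t' := Finset.Icc ⊥ y) (s' := fun w => Finset.Icc w y) fun z w => by
    simp only [Finset.mem_Icc, bot_le, true_and]
    exact ⟨fun ⟨hzy, hwz⟩ => ⟨⟨hwz, hzy⟩, hwz.trans hzy⟩, fun ⟨⟨hwz, hzy⟩, _⟩ => ⟨hzy, hwz⟩⟩]
  calc ∑ w ∈ Finset.Icc ⊥ y, ∑ z ∈ Finset.Icc w y, h w * mu w z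
      = ∑ w ∈ Finset.Icc ⊥ y, if w = y then h w else 0 :=
        Finset.sum_congr rfl fun w hw => by
          rw [← Finset.mul_sum, sum_Icc_moebius mu hmu_self hmu_lt (Finset.mem_Icc.1 hw).2,
            mul_ite, mul_one, mul_zero]
    _ = h y := by simp

end Moebius

section Blocks

variable {P : Type*} [Lattice P] [OrderBot P] [LocallyFiniteOrder P]
  [DecidableRel ((· ≤ ·) : P → P → Prop)] {n : ℕ} (x : Fin n → P)

def block (k : Fin n) : Finset P :=
  (Finset.Icc ⊥ (x k)).filter fun z => ∀ j, j < k → ¬ z ≤ x j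

lemma disjoint_block_of_lt {a b : Fin n} (hab : a < b) : Disjoint (block x a) (block x b) :=
  Finset.disjoint_left.2 fun _ hza hzb =>
    (Finset.mem_filter.1 hzb).2 a hab (Finset.mem_Icc.1 (Finset.mem_filter.1 hza).1).2

variable {x}

lemma exists_mem_block_le (hord : ∀ i j, x i ≤ x j → i ≤ j)
    (hmeet : ∀ i j, ∃ k, x k = x i ⊓ x j) {z : P} {m : Fin n} (hzm : z ≤ x m) :
    ∃ k, x k ≤ x m ∧ z ∈ block x k := by
  obtain ⟨k, hk, hmin⟩ := (Finset.univ.filter fun k => z ≤ x k).exists_min_image id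
    ⟨m, Finset.mem_filter.2 ⟨Finset.mem_univ m, hzm⟩⟩
  have hzk : z ≤ x k := (Finset.mem_filter.1 hk).2
  have hmin' : ∀ j, z ≤ x j → k ≤ j := fun j hzj =>
    hmin j (Finset.mem_filter.2 ⟨Finset.mem_univ j, hzj⟩)
  refine ⟨k, ?_, Finset.mem_filter.2 ⟨Finset.mem_Icc.2 ⟨bot_le, hzk⟩,
    fun j hjk hzj => (hmin' j hzj).not_gt hjk⟩⟩
  -- the meet `x p = x k ⊓ x m` lies above `z`, so minimality and `hord` force `p = k`
  obtain ⟨p, hp⟩ := hmeet k m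
  have hpk : p = k := le_antisymm (hord p k (hp ▸ inf_le_left))
    (hmin' p (hp ▸ le_inf hzk hzm))
  exact hpk ▸ hp ▸ inf_le_right

open scoped Classical in
lemma biUnion_block (hord : ∀ i j, x i ≤ x j → i ≤ j)
    (hmeet : ∀ i j, ∃ k, x k = x i ⊓ x j) (m : Fin n) :
    (Finset.univ.filter fun k => x k ≤ x m).biUnion (block x) = Finset.Icc ⊥ (x m) := by
  ext z
  simp only [Finset.mem_biUnion, Finset.mem_filter, Finset.mem_univ, true_and, Finset.mem_Icc,
    bot_le]
  constructor
  · rintro ⟨k, hkm, hz⟩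
    exact (Finset.mem_Icc.1 (Finset.mem_filter.1 hz).1).2.trans hkm
  · exact exists_mem_block_le hord hmeet

lemma sum_sum_block {M : Type*} [AddCommMonoid M] (hord : ∀ i j, x i ≤ x j → i ≤ j)
    (hmeet : ∀ i j, ∃ k, x k = x i ⊓ x j) (F : P → M) (m : Fin n) :
    ∑ k ∈ Finset.univ.filter (fun k => x k ≤ x m), ∑ z ∈ block x k, F z =
      ∑ z ∈ Finset.Icc ⊥ (x m), F z := by
  classical
  rw [← biUnion_block hord hmeet m, Finset.sum_biUnion]
  intro a _ b _ hab
  rcases hab.lt_or_gt with h | h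
  exacts [disjoint_block_of_lt x h, (disjoint_block_of_lt x h).symm]

end Blocks

section ZetaMatrix

variable {P : Type*} [Preorder P] [DecidableRel ((· ≤ ·) : P → P → Prop)] {n : ℕ}

def zetaMatrix (R : Type*) [Zero R] [One R] (x : Fin n → P) : Matrix (Fin n) (Fin n) R :=
  of fun i j => if x j ≤ x i then 1 else 0

lemma memKn_zetaMatrix {x : Fin n → P} (hord : ∀ i j, x i ≤ x j → i ≤ j) :
    MemKn (zetaMatrix ℝ x) := by
  refine ⟨fun i j hij => if_neg fun hji => (hord j i hji).not_gt hij, fun i j => ?_,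
    fun i => if_pos le_rfl⟩
  by_cases h : x j ≤ x i <;> simp [zetaMatrix, h]

lemma zetaMatrix_map_ofReal (x : Fin n → P) :
    (zetaMatrix ℝ x).map Complex.ofReal = zetaMatrix ℂ x := by
  ext i j
  by_cases h : x j ≤ x i <;> simp [zetaMatrix, h]

end ZetaMatrix

lemma zetaMatrix_mul_diagonal_mul_transpose {P R : Type*} [Lattice P] [OrderBot P]
    [LocallyFiniteOrder P] [DecidableRel ((· ≤ ·) : P → P → Prop)] [Ring R] {n : ℕ}
    {x : Fin n → P} (hord : ∀ i j, x i ≤ x j → i ≤ j) (hmeet : ∀ i j, ∃ k, x k = x i ⊓ x j)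
    (mu : P → P → R) (hmu_self : ∀ p, mu p p = 1)
    (hmu_lt : ∀ p q : P, p < q → mu p q = -∑ r ∈ Finset.Ico p q, mu p r)
    (h : P → R) (c : Fin n → R)
    (hc : ∀ i, c i = ∑ z ∈ block x i, ∑ w ∈ Finset.Icc ⊥ z, h w * mu w z) :
    zetaMatrix R x * diagonal c * (zetaMatrix R x)ᵀ = of fun i j => h (x i ⊓ x j) := by
  ext i j
  obtain ⟨m, hm⟩ := hmeet i j
  have hterm : ∀ k, (if x k ≤ x i then (1 : R) else 0) * c k * (if x k ≤ x j then 1 else 0) =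
      if x k ≤ x m then c k else 0 := fun k => by
    by_cases hi : x k ≤ x i <;> by_cases hj : x k ≤ x j <;> simp [hm, hi, hj]
  rw [mul_apply]
  simp only [mul_diagonal, transpose_apply, zetaMatrix, of_apply, hterm]
  rw [← Finset.sum_filter, ← hm, Finset.sum_congr rfl fun k _ => hc k,
    sum_sum_block hord hmeet, sum_Icc_bot_sum_Icc_bot_mul_moebius mu hmu_self hmu_lt]

lemma of_sup_eq_diagonal_mul_of_inf_mul_diagonal {P K ι : Type*} [Lattice P] [Field K]
    [Fintype ι] [DecidableEq ι] {f g : P → K} (hf : ∀ p, f p ≠ 0)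
    (hsemi : ∀ p q : P, f (p ⊓ q) * f (p ⊔ q) = f p * f q) (hg : ∀ p, g p = (f p)⁻¹)
    (x : ι → P) :
    (of fun i j => f (x i ⊔ x j)) =
      diagonal (f ∘ x) * (of fun i j => g (x i ⊓ x j)) * diagonal (f ∘ x) := by
  ext i j
  rw [mul_diagonal, diagonal_mul, of_apply, of_apply, hg, Function.comp_apply,
    Function.comp_apply, eq_comm, ← div_eq_mul_inv, div_mul_eq_mul_div, div_eq_iff (hf _),
    ← hsemi, mul_comm]

section EigenvalueBound

variable {ι : Type*} [Fintype ι] [DecidableEq ι] {E : Matrix ι ι ℂ}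

lemma sq_mul_sqNorm_le_sqNorm_diagonal_mul_mul_diagonal_mulVec {c : ℝ} (hc : 0 ≤ c)
    (hE : ∀ w, c * sqNorm w ≤ sqNorm (E *ᵥ w)) (hEt : ∀ w, c * sqNorm w ≤ sqNorm (Eᵀ *ᵥ w))
    {a b : ι → ℂ} {ma mb : ℝ} (hma : 0 ≤ ma) (ha : ∀ i, ma ≤ ‖a i‖) (hmb : 0 ≤ mb)
    (hb : ∀ i, mb ≤ ‖b i‖) (v : ι → ℂ) :
    (ma ^ 2 * mb * c) ^ 2 * sqNorm v ≤
      sqNorm ((diagonal a * (E * diagonal b * Eᵀ) * diagonal a) *ᵥ v) := by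
  simp only [← mulVec_mulVec]
  calc (ma ^ 2 * mb * c) ^ 2 * sqNorm v = ma ^ 2 * (c * (mb ^ 2 * (c * (ma ^ 2 * sqNorm v)))) := by
        ring
    _ ≤ ma ^ 2 * (c * (mb ^ 2 * (c * sqNorm (diagonal a *ᵥ v)))) := by
        gcongr; exact sq_mul_sqNorm_le_sqNorm_diagonal_mulVec hma ha v
    _ ≤ ma ^ 2 * (c * (mb ^ 2 * sqNorm (Eᵀ *ᵥ diagonal a *ᵥ v))) := by gcongr; exact hEt _
    _ ≤ ma ^ 2 * (c * sqNorm (diagonal b *ᵥ Eᵀ *ᵥ diagonal a *ᵥ v)) := by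
        gcongr; exact sq_mul_sqNorm_le_sqNorm_diagonal_mulVec hmb hb _
    _ ≤ ma ^ 2 * sqNorm (E *ᵥ diagonal b *ᵥ Eᵀ *ᵥ diagonal a *ᵥ v) := by gcongr; exact hE _
    _ ≤ _ := sq_mul_sqNorm_le_sqNorm_diagonal_mulVec hma ha _

lemma sqNorm_mul_diagonal_mul_transpose_mulVec_le {C : ℝ} (hC : 0 ≤ C)
    (hE : ∀ w, sqNorm (E *ᵥ w) ≤ C * sqNorm w) (hEt : ∀ w, sqNorm (Eᵀ *ᵥ w) ≤ C * sqNorm w)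
    {d : ι → ℂ} {Md : ℝ} (hd : ∀ i, ‖d i‖ ≤ Md) (v : ι → ℂ) :
    sqNorm ((E * diagonal d * Eᵀ) *ᵥ v) ≤ (C * Md) ^ 2 * sqNorm v := by
  simp only [← mulVec_mulVec]
  calc sqNorm (E *ᵥ diagonal d *ᵥ Eᵀ *ᵥ v) ≤ C * sqNorm (diagonal d *ᵥ Eᵀ *ᵥ v) := hE _
    _ ≤ C * (Md ^ 2 * sqNorm (Eᵀ *ᵥ v)) := by
        gcongr; exact sqNorm_diagonal_mulVec_le_sq_mul hd _
    _ ≤ C * (Md ^ 2 * (C * sqNorm v)) := by gcongr; exact hEt v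
    _ = (C * Md) ^ 2 * sqNorm v := by ring

lemma le_norm_of_diagonal_mul_mul_diagonal_mulVec_eq_smul {c C : ℝ} (hc : 0 ≤ c) (hC : 0 ≤ C)
    (hE_low : ∀ w, c * sqNorm w ≤ sqNorm (E *ᵥ w))
    (hEt_low : ∀ w, c * sqNorm w ≤ sqNorm (Eᵀ *ᵥ w))
    (hE_up : ∀ w, sqNorm (E *ᵥ w) ≤ C * sqNorm w)
    (hEt_up : ∀ w, sqNorm (Eᵀ *ᵥ w) ≤ C * sqNorm w)
    {a b d v : ι → ℂ} {lam : ℂ} (hv : v ≠ 0)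
    (heig : (diagonal a * (E * diagonal b * Eᵀ) * diagonal a) *ᵥ v =
      lam • (E * diagonal d * Eᵀ) *ᵥ v) :
    (⨅ i, ‖a i‖) ^ 2 * (⨅ i, ‖b i‖) * (⨆ i, ‖d i‖)⁻¹ * C⁻¹ * c ≤ ‖lam‖ := by
  set ma := ⨅ i, ‖a i‖
  set mb := ⨅ i, ‖b i‖
  set Md := ⨆ i, ‖d i‖
  have hma : 0 ≤ ma := Real.iInf_nonneg fun i => norm_nonneg _
  have hmb : 0 ≤ mb := Real.iInf_nonneg fun i => norm_nonneg _
  have hMd : 0 ≤ Md := Real.iSup_nonneg fun i => norm_nonneg _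
  have hlhs := sq_mul_sqNorm_le_sqNorm_diagonal_mul_mul_diagonal_mulVec hc hE_low hEt_low hma
    (fun i => ciInf_le (Set.finite_range _).bddBelow i) hmb
    (fun i => ciInf_le (Set.finite_range _).bddBelow i) v
  have hrhs := sqNorm_mul_diagonal_mul_transpose_mulVec_le hC hE_up hEt_up
    (le_ciSup (f := fun i => ‖d i‖) (Set.finite_range _).bddAbove) v
  rw [heig, sqNorm_smul] at hlhs
  have hsq : (ma ^ 2 * mb * c) ^ 2 * sqNorm v ≤ (‖lam‖ * (C * Md)) ^ 2 * sqNorm v :=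
    calc _ ≤ ‖lam‖ ^ 2 * sqNorm ((E * diagonal d * Eᵀ) *ᵥ v) := hlhs
      _ ≤ ‖lam‖ ^ 2 * ((C * Md) ^ 2 * sqNorm v) := by gcongr
      _ = _ := by ring
  have hle : ma ^ 2 * mb * c ≤ ‖lam‖ * (C * Md) :=
    (pow_le_pow_iff_left₀ (by positivity) (by positivity) two_ne_zero).1
      (le_of_mul_le_mul_right hsq (sqNorm_pos hv))
  calc ma ^ 2 * mb * Md⁻¹ * C⁻¹ * c = ma ^ 2 * mb * c / (C * Md) := by ring
    _ ≤ ‖lam‖ := div_le_of_le_mul₀ (mul_nonneg hC hMd) (norm_nonneg _) hle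

end EigenvalueBound

theorem global_lower_bound_join_wrt_meet_general
    {P : Type*} [Lattice P] [OrderBot P] [LocallyFiniteOrder P]
    [DecidableRel ((· ≤ ·) : P → P → Prop)]
    (mu : P → P → ℂ)
    (hmu_self : ∀ p, mu p p = 1)
    (hmu_lt : ∀ p q : P, p < q → mu p q = -∑ r ∈ Finset.Ico p q, mu p r)
    (f : P → ℂ) (hf : ∀ p, f p ≠ 0)
    (hsemi : ∀ p q : P, f (p ⊓ q) * f (p ⊔ q) = f p * f q)
    (g : P → ℂ) (hg : ∀ p, g p = (f p)⁻¹)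
    {n : ℕ}
    (x : Fin n → P)
    (hord : ∀ i j, x i ≤ x j → i ≤ j)
    (hmeet : ∀ i j, ∃ k, x k = x i ⊓ x j)
    (d : Fin n → ℂ)
    (hd : ∀ i, d i = ∑ z ∈ (Finset.Icc ⊥ (x i)).filter
        (fun z => ∀ j, j < i → ¬ z ≤ x j),
      ∑ w ∈ Finset.Icc ⊥ z, f w * mu w z)
    (l : Fin n → ℂ)
    (hl : ∀ i, l i = ∑ z ∈ (Finset.Icc ⊥ (x i)).filter
        (fun z => ∀ j, j < i → ¬ z ≤ x j),
      ∑ w ∈ Finset.Icc ⊥ z, g w * mu w z)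
    (lam : ℂ) (v : Fin n → ℂ) (hv : v ≠ 0)
    (heig : (Matrix.of fun i j => f (x i ⊔ x j)).mulVec v =
      lam • (Matrix.of fun i j => f (x i ⊓ x j)).mulVec v) :
    ‖lam‖ ≥
      (⨅ i, ‖f (x i)‖) ^ 2 *
        (⨅ i, ‖l i‖) * (⨆ i, ‖d i‖)⁻¹ *
        (CKn n)⁻¹ * cKn n := by
  have hK := memKn_zetaMatrix hord
  have hE_low := hK.cKn_mul_sqNorm_le
  have hEt_low := hK.cKn_mul_sqNorm_le_transpose
  have hE_up := hK.sqNorm_le_CKn_mul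
  have hEt_up := hK.sqNorm_transpose_le_CKn_mul
  rw [zetaMatrix_map_ofReal] at hE_low hEt_low hE_up hEt_up
  rw [of_sup_eq_diagonal_mul_of_inf_mul_diagonal hf hsemi hg,
    ← zetaMatrix_mul_diagonal_mul_transpose hord hmeet mu hmu_self hmu_lt g l hl,
    ← zetaMatrix_mul_diagonal_mul_transpose hord hmeet mu hmu_self hmu_lt f d hd] at heig
  exact le_norm_of_diagonal_mul_mul_diagonal_mulVec_eq_smul cKn_nonneg CKn_nonneg
    hE_low hEt_low hE_up hEt_up hv heig

/-- **global lower bound, dual problem.** If in addition each `l i ≠ 0`,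
every nonzero `(S)_f`-eigenvalue `λ` of `[S]_f` satisfies
`|λ| ≥ (min_i |f (x i)|)² m_g M_f⁻¹ C_n⁻¹ c_n`. -/
theorem global_lower_bound_join_wrt_meet
    {P : Type*} [Lattice P] [OrderBot P] [LocallyFiniteOrder P]
    [DecidableRel ((· ≤ ·) : P → P → Prop)]
    (mu : P → P → ℂ)
    (hmu_self : ∀ p, mu p p = 1)
    (hmu_lt : ∀ p q : P, p < q → mu p q = -∑ r ∈ Finset.Ico p q, mu p r)
    (hmu_nle : ∀ p q : P, ¬ p ≤ q → mu p q = 0)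
    (f : P → ℂ) (hf : ∀ p, f p ≠ 0)
    (hsemi : ∀ p q : P, f (p ⊓ q) * f (p ⊔ q) = f p * f q)
    (g : P → ℂ) (hg : ∀ p, g p = (f p)⁻¹)
    {n : ℕ} (hn : 0 < n)
    (x : Fin n → P) (hinj : Function.Injective x)
    (hord : ∀ i j, x i ≤ x j → i ≤ j)
    (hmeet : ∀ i j, ∃ k, x k = x i ⊓ x j)
    (d : Fin n → ℂ)
    (hd : ∀ i, d i = ∑ z ∈ (Finset.Icc ⊥ (x i)).filter
        (fun z => ∀ j, j < i → ¬ z ≤ x j),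
      ∑ w ∈ Finset.Icc ⊥ z, f w * mu w z)
    (hd0 : ∀ i, d i ≠ 0)
    (l : Fin n → ℂ)
    (hl : ∀ i, l i = ∑ z ∈ (Finset.Icc ⊥ (x i)).filter
        (fun z => ∀ j, j < i → ¬ z ≤ x j),
      ∑ w ∈ Finset.Icc ⊥ z, g w * mu w z)
    (hl0 : ∀ i, l i ≠ 0)
    (lam : ℂ) (hlam : lam ≠ 0) (v : Fin n → ℂ) (hv : v ≠ 0)
    (heig : (Matrix.of fun i j => f (x i ⊔ x j)).mulVec v =
      lam • (Matrix.of fun i j => f (x i ⊓ x j)).mulVec v) :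
    ‖lam‖ ≥
      (⨅ i, ‖f (x i)‖) ^ 2 *
        (⨅ i, ‖l i‖) * (⨆ i, ‖d i‖)⁻¹ *
        (CKn n)⁻¹ * cKn n :=
  global_lower_bound_join_wrt_meet_general mu hmu_self hmu_lt f hf hsemi g hg x hord hmeet d hd l hl
    lam v hv heig
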